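/- arXiv:1609.08542 — 3 statements merged into one kernel-verified Lean document; each statement's English description precedes it below -/
import Mathlib

section
/- (Normal ordering for the relation XY = qYX + 1) Let A be a unital associative algebra over ℝ and let X, Y ∈ A satisfy X·Y = q·(Y·X) + 1. Then for all natural numbers m, n: X^m·Y^n = ∑_{i=0}^{m} q^{(n-i)(m-i)}·[i]_q!·binom(n,i)_q·binom(m,i)_q·Y^{n-i}·X^{m-i}, where every term with i > n has coefficient 0 (since binom(n,i)_q = 0), so the powers Y^{n-i} there may be interpreted via truncated subtraction. -/
/-!
Induction on `m`, with `n` fixed. Moving `X` past `Y ^ k` gives `X Y^k = q^k Y^k X + [k]_q Y^(k-1)`,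
so left multiplication by `X` sends the term `c(m,i) Y^(n-i) X^(m-i)` of the expansion to
`q^(n-i) c(m,i) Y^(n-i) X^(m+1-i) + [n-i]_q c(m,i) Y^(n-i-1) X^(m-i)`. Collecting terms, the claim
for `m + 1` reduces to the coefficient recursion `c(m+1,i+1) = q^(n-i-1) c(m,i+1) + [n-i]_q c(m,i)`,
which is the `q`-Pascal rule for `binom(m+1,i+1)_q` together with
`[i+1]_q! binom(n,i+1)_q = [n-i]_q [i]_q! binom(n,i)_q`.
-/

/-- The q-integer `[n]_q = (1 - q^n)/(1 - q)`. -/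
noncomputable def qInt (q : ℝ) (n : ℕ) : ℝ := (1 - q ^ n) / (1 - q)

/-- The q-factorial `[n]_q! = [1]_q ⋯ [n]_q`, with `[0]_q! = 1`. -/
noncomputable def qFact (q : ℝ) : ℕ → ℝ
  | 0 => 1
  | n + 1 => qFact q n * qInt q (n + 1)

/-- The q-binomial coefficient `binom(n,m)_q`, with value `0` when `m > n`. -/
noncomputable def qBinom (q : ℝ) (n m : ℕ) : ℝ :=
  if m ≤ n then qFact q n / (qFact q m * qFact q (n - m)) else 0

open Finset

section QAnalogues

variable {q : ℝ}

@[simp]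
lemma qInt_zero : qInt q 0 = 0 := by simp [qInt]

lemma qInt_succ (hq : q ≠ 1) (k : ℕ) : qInt q (k + 1) = q * qInt q k + 1 := by
  have : 1 - q ≠ 0 := sub_ne_zero.mpr hq.symm
  simp only [qInt]
  field_simp
  ring

lemma qInt_add (hq : q ≠ 1) (a b : ℕ) : qInt q (a + b) = qInt q a + q ^ a * qInt q b := by
  have : 1 - q ≠ 0 := sub_ne_zero.mpr hq.symm
  simp only [qInt]
  field_simp
  ring

lemma qInt_ne_zero (hq : |q| < 1) {n : ℕ} (hn : n ≠ 0) : qInt q n ≠ 0 := by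
  have hpow : |q ^ n| < 1 := by
    rw [abs_pow]
    exact pow_lt_one₀ (abs_nonneg q) hq hn
  exact div_ne_zero (sub_ne_zero.mpr (lt_of_abs_lt hpow).ne') (sub_ne_zero.mpr (lt_of_abs_lt hq).ne')

lemma qFact_succ (n : ℕ) : qFact q (n + 1) = qFact q n * qInt q (n + 1) := rfl

lemma qFact_ne_zero (hq : |q| < 1) (n : ℕ) : qFact q n ≠ 0 := by
  induction n with
  | zero => exact one_ne_zero
  | succ k ih => exact mul_ne_zero ih (qInt_ne_zero hq k.succ_ne_zero)

lemma qBinom_of_lt {n k : ℕ} (h : n < k) : qBinom q n k = 0 := by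
  simp [qBinom, h.not_ge]

lemma qBinom_of_add_eq {n k l : ℕ} (h : k + l = n) :
    qBinom q n k = qFact q n / (qFact q k * qFact q l) := by
  subst h
  simp [qBinom]

lemma qBinom_zero_right (hq : |q| < 1) (n : ℕ) : qBinom q n 0 = 1 := by
  rw [qBinom_of_add_eq (zero_add n), qFact, one_mul, div_self (qFact_ne_zero hq n)]

lemma qBinom_self (hq : |q| < 1) (n : ℕ) : qBinom q n n = 1 := by
  rw [qBinom_of_add_eq (add_zero n), qFact, mul_one, div_self (qFact_ne_zero hq n)]

lemma qBinom_succ_succ (hq : |q| < 1) (m i : ℕ) :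
    qBinom q (m + 1) (i + 1) = qBinom q m (i + 1) + q ^ (m - i) * qBinom q m i := by
  rcases lt_trichotomy i m with h | rfl | h
  · obtain ⟨b, rfl⟩ := Nat.exists_eq_add_of_lt h
    have hsplit : qInt q (i + b + 1 + 1) = qInt q (b + 1) + q ^ (b + 1) * qInt q (i + 1) := by
      rw [← qInt_add (lt_of_abs_lt hq).ne]; ring_nf
    rw [qBinom_of_add_eq (show (i + 1) + (b + 1) = i + b + 1 + 1 by ring),
      qBinom_of_add_eq (show (i + 1) + b = i + b + 1 by ring),
      qBinom_of_add_eq (show i + (b + 1) = i + b + 1 by ring),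
      show i + b + 1 - i = b + 1 by omega, qFact_succ (i + b + 1), hsplit,
      qFact_succ i, qFact_succ b]
    have := qFact_ne_zero hq i
    have := qFact_ne_zero hq b
    have := qInt_ne_zero hq i.succ_ne_zero
    have := qInt_ne_zero hq b.succ_ne_zero
    field_simp
  · rw [qBinom_self hq, qBinom_self hq, qBinom_of_lt (Nat.lt_succ_self i)]
    simp
  · rw [qBinom_of_lt h, qBinom_of_lt (by omega), qBinom_of_lt (by omega)]
    simp

lemma qFact_mul_qBinom_succ (hq : |q| < 1) (n i : ℕ) :
    qFact q (i + 1) * qBinom q n (i + 1) = qInt q (n - i) * (qFact q i * qBinom q n i) := by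
  rcases lt_or_ge i n with h | h
  · obtain ⟨a, rfl⟩ := Nat.exists_eq_add_of_lt h
    rw [qBinom_of_add_eq (show (i + 1) + a = i + a + 1 by ring),
      qBinom_of_add_eq (show i + (a + 1) = i + a + 1 by ring),
      show i + a + 1 - i = a + 1 by omega, qFact_succ i, qFact_succ a]
    have := qFact_ne_zero hq i
    have := qFact_ne_zero hq a
    have := qInt_ne_zero hq i.succ_ne_zero
    have := qInt_ne_zero hq a.succ_ne_zero
    field_simp
  · rw [qBinom_of_lt (by omega), Nat.sub_eq_zero_of_le h]
    simp

end QAnalogues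

section NormalOrdering

variable {q : ℝ}

noncomputable def normalCoeff (q : ℝ) (m n i : ℕ) : ℝ :=
  q ^ ((n - i) * (m - i)) * qFact q i * qBinom q n i * qBinom q m i

lemma normalCoeff_zero_zero (hq : |q| < 1) (n : ℕ) : normalCoeff q 0 n 0 = 1 := by
  simp [normalCoeff, qFact, qBinom_zero_right hq]

lemma normalCoeff_of_lt {m n i : ℕ} (h : m < i) : normalCoeff q m n i = 0 := by
  simp [normalCoeff, qBinom_of_lt h]

lemma normalCoeff_succ_zero (hq : |q| < 1) (m n : ℕ) :
    normalCoeff q (m + 1) n 0 = q ^ n * normalCoeff q m n 0 := by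
  simp only [normalCoeff, qBinom_zero_right hq, Nat.sub_zero]
  ring

/-- The powers of `q` only fail to match where truncated subtraction kicks in, and there a
`q`-binomial or `[0]_q` vanishes. -/
lemma normalCoeff_succ_succ (hq : |q| < 1) (m n i : ℕ) :
    normalCoeff q (m + 1) n (i + 1) =
      q ^ (n - (i + 1)) * normalCoeff q m n (i + 1) + qInt q (n - i) * normalCoeff q m n i := by
  have hleft : q ^ ((n - (i + 1)) * (m - i)) * qBinom q m (i + 1) =
      q ^ (n - (i + 1)) * q ^ ((n - (i + 1)) * (m - (i + 1))) * qBinom q m (i + 1) := by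
    rcases lt_or_ge i m with h | h
    · rw [← pow_add, show m - i = m - (i + 1) + 1 by omega]
      ring_nf
    · simp [qBinom_of_lt (Nat.lt_succ_of_le h)]
  have hright : q ^ ((n - (i + 1)) * (m - i)) * q ^ (m - i) * qFact q (i + 1) * qBinom q n (i + 1) =
      q ^ ((n - i) * (m - i)) * (qInt q (n - i) * (qFact q i * qBinom q n i)) := by
    rw [mul_assoc _ (qFact q (i + 1)), qFact_mul_qBinom_succ hq]
    rcases lt_or_ge i n with h | h
    · rw [← pow_add, show n - i = n - (i + 1) + 1 by omega]
      ring_nf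
    · simp [Nat.sub_eq_zero_of_le h]
  simp only [normalCoeff, Nat.add_sub_add_right, qBinom_succ_succ hq m i]
  linear_combination qFact q (i + 1) * qBinom q n (i + 1) * hleft + qBinom q m i * hright

variable {A : Type*} [Ring A] [Algebra ℝ A] {X Y : A}

lemma mul_pow_of_mul_eq_smul_add_one (hq : q ≠ 1) (hXY : X * Y = q • (Y * X) + 1) (k : ℕ) :
    X * Y ^ k = q ^ k • (Y ^ k * X) + qInt q k • Y ^ (k - 1) := by
  induction k with
  | zero => simp
  | succ k ih =>
    have hshift : qInt q k • (Y * Y ^ (k - 1)) = qInt q k • Y ^ k := by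
      rcases k with _ | k
      · simp
      · rw [← pow_succ', Nat.add_sub_cancel]
    calc X * Y ^ (k + 1) = q • (Y * (X * Y ^ k)) + Y ^ k := by
          rw [pow_succ', ← mul_assoc, hXY, add_mul, one_mul, smul_mul_assoc, mul_assoc]
      _ = q ^ (k + 1) • (Y ^ (k + 1) * X) + (q * qInt q k + 1) • Y ^ k := by
          rw [ih, mul_add, mul_smul_comm, mul_smul_comm, hshift, ← mul_assoc, ← pow_succ',
            smul_add, smul_smul, smul_smul, ← pow_succ', add_smul, one_smul, add_assoc]
      _ = _ := by rw [qInt_succ hq, Nat.add_sub_cancel]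

lemma mul_sum_normalCoeff (hq : |q| < 1) (hXY : X * Y = q • (Y * X) + 1) (m n : ℕ) :
    X * ∑ i ∈ range (m + 1), normalCoeff q m n i • (Y ^ (n - i) * X ^ (m - i)) =
      ∑ i ∈ range (m + 2), normalCoeff q (m + 1) n i • (Y ^ (n - i) * X ^ (m + 1 - i)) := by
  set c := normalCoeff q m n
  set T : ℕ → A := fun i => Y ^ (n - i) * X ^ (m + 1 - i)
  have hterm : ∀ i ∈ range (m + 1), X * (c i • (Y ^ (n - i) * X ^ (m - i))) =
      (q ^ (n - i) * c i) • T i + (qInt q (n - i) * c i) • T (i + 1) := by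
    intro i hi
    have hX : X * X ^ (m - i) = X ^ (m + 1 - i) := by
      rw [← pow_succ', show m - i + 1 = m + 1 - i by simp at hi; omega]
    rw [mul_smul_comm, ← mul_assoc, mul_pow_of_mul_eq_smul_add_one (lt_of_abs_lt hq).ne hXY,
      add_mul, smul_mul_assoc, smul_mul_assoc, mul_assoc, hX, smul_add, smul_smul, smul_smul,
      Nat.sub_sub]
    simp [T, mul_comm]
  have hfirst : ∑ i ∈ range (m + 1), (q ^ (n - i) * c i) • T i =
      ∑ i ∈ range (m + 1), (q ^ (n - (i + 1)) * c (i + 1)) • T (i + 1) + (q ^ n * c 0) • T 0 := by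
    have hc : c (m + 1) = 0 := normalCoeff_of_lt (Nat.lt_succ_self m)
    have h := sum_range_succ' (fun i => (q ^ (n - i) * c i) • T i) (m + 1)
    rwa [sum_range_succ, hc, mul_zero, zero_smul, add_zero, Nat.sub_zero] at h
  rw [mul_sum, sum_congr rfl hterm, sum_add_distrib, hfirst,
    sum_range_succ' (fun i => normalCoeff q (m + 1) n i • T i)]
  simp only [normalCoeff_succ_succ hq, normalCoeff_succ_zero hq, add_smul, sum_add_distrib]
  abel

end NormalOrdering

/-- Normal ordering for the relation `XY = qYX + 1`. -/
theorem normal_ordering_XY (q : ℝ) (hq₁ : -1 < q) (hq₂ : q < 1)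
    {A : Type*} [Ring A] [Algebra ℝ A] (X Y : A)
    (hXY : X * Y = q • (Y * X) + 1) (m n : ℕ) :
    X ^ m * Y ^ n =
      ∑ i ∈ Finset.range (m + 1),
        (q ^ ((n - i) * (m - i)) * qFact q i * qBinom q n i * qBinom q m i) •
          (Y ^ (n - i) * X ^ (m - i)) := by
  have hq : |q| < 1 := abs_lt.mpr ⟨hq₁, hq₂⟩
  change X ^ m * Y ^ n = ∑ i ∈ range (m + 1), normalCoeff q m n i • (Y ^ (n - i) * X ^ (m - i))
  induction m with
  | zero => simp [normalCoeff_zero_zero hq]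
  | succ m ih => rw [pow_succ', mul_assoc, ih, mul_sum_normalCoeff hq hXY]
end

section
/- (Uniform two-sided bound on q-binomial coefficients) For all natural numbers n, m with m ≤ n, one has (D(q)·C(|q|))^{-1} ≤ binom(n,m)_q ≤ D(q)·C(|q|); in particular binom(n,m)_q > 0. -/
/-- The constant `C(t) = ∏_{i=1}^∞ (1 - t^i)⁻¹` for `0 ≤ t < 1`. -/
noncomputable def Cconst (t : ℝ) : ℝ := ∏' i : ℕ, (1 - t ^ (i + 1))⁻¹

/-- The constant `D(q) = ∏_{i=1}^∞ (1 + |q|^i)` for `-1 < q < 1`. -/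
noncomputable def Dconst (q : ℝ) : ℝ := ∏' i : ℕ, (1 + |q| ^ (i + 1))

/-! Cancelling `[m]_q!` and the powers of `1 - q` leaves
`binom(n,m)_q = ∏_{i=m+1}^{n} (1 - q^i) / ∏_{i=1}^{n-m} (1 - q^i)`. Every finite product of
factors `1 - q^i` lies between `C(|q|)⁻¹` and `D(q)`, because `1 - |q|^i ≤ 1 - q^i ≤ 1 + |q|^i`
and all factors of the infinite products defining `C` and `D` are at least `1`; so the ratio lies
between `(D(q) C(|q|))⁻¹` and `D(q) C(|q|)`. -/

namespace Real

variable {ι : Type*} {f : ι → ℝ}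

theorem multipliable_inv_one_sub_of_summable (hf : Summable f) (hf₁ : ∀ i, f i < 1) :
    Multipliable fun i ↦ (1 - f i)⁻¹ := by
  refine multipliable_of_summable_log (fun i ↦ inv_pos.2 (sub_pos.2 (hf₁ i))) ?_
  simpa [log_inv, sub_eq_add_neg] using (summable_log_one_add_of_summable hf.neg).neg

theorem prod_le_tprod_of_one_le (h : ∀ i, 1 ≤ f i) (hf : Multipliable f) (s : Finset ι) :
    ∏ i ∈ s, f i ≤ ∏' i, f i :=
  ge_of_tendsto hf.hasProd
    (Filter.eventually_atTop.2 ⟨s, fun _ hsu ↦ Finset.prod_mono_set_of_one_le h hsu⟩)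

end Real

theorem div_mem_Icc_of_mem_Icc_inv {a b c d : ℝ} (hc : 0 < c) (ha : a ∈ Set.Icc c⁻¹ d)
    (hb : b ∈ Set.Icc c⁻¹ d) : a / b ∈ Set.Icc (d * c)⁻¹ (d * c) := by
  have hc' : 0 < c⁻¹ := inv_pos.2 hc
  have hd : 0 < d := hc'.trans_le (ha.1.trans ha.2)
  constructor
  · calc (d * c)⁻¹ = c⁻¹ / d := by rw [mul_inv, div_eq_mul_inv, mul_comm]
      _ ≤ a / b := div_le_div₀ (hc'.trans_le ha.1).le ha.1 (hc'.trans_le hb.1) hb.2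
  · calc a / b ≤ d / c⁻¹ := div_le_div₀ hd.le ha.2 hc' hb.1
      _ = d * c := by rw [div_inv_eq_mul]

section Bounds

variable {q t : ℝ}

theorem summable_pow_succ (h₀ : 0 ≤ t) (h₁ : t < 1) : Summable fun i : ℕ ↦ t ^ (i + 1) :=
  (summable_nat_add_iff 1).2 (summable_geometric_of_lt_one h₀ h₁)

theorem one_le_inv_one_sub_pow_succ (h₀ : 0 ≤ t) (h₁ : t < 1) (i : ℕ) :
    1 ≤ (1 - t ^ (i + 1))⁻¹ :=
  (one_le_inv₀ (sub_pos.2 (pow_lt_one₀ h₀ h₁ i.succ_ne_zero))).2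
    (sub_le_self _ (pow_nonneg h₀ _))

theorem multipliable_inv_one_sub_pow_succ (h₀ : 0 ≤ t) (h₁ : t < 1) :
    Multipliable fun i : ℕ ↦ (1 - t ^ (i + 1))⁻¹ :=
  Real.multipliable_inv_one_sub_of_summable (summable_pow_succ h₀ h₁)
    fun i ↦ pow_lt_one₀ h₀ h₁ i.succ_ne_zero

theorem one_le_Cconst (h₀ : 0 ≤ t) (h₁ : t < 1) : 1 ≤ Cconst t := by
  simpa [Cconst] using Real.prod_le_tprod_of_one_le (one_le_inv_one_sub_pow_succ h₀ h₁)
    (multipliable_inv_one_sub_pow_succ h₀ h₁) ∅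

theorem inv_Cconst_le_prod_one_sub_pow_succ (h₀ : 0 ≤ t) (h₁ : t < 1) (s : Finset ℕ) :
    (Cconst t)⁻¹ ≤ ∏ i ∈ s, (1 - t ^ (i + 1)) := by
  have h := Real.prod_le_tprod_of_one_le (one_le_inv_one_sub_pow_succ h₀ h₁)
    (multipliable_inv_one_sub_pow_succ h₀ h₁) s
  rw [Finset.prod_inv_distrib] at h
  have hpos : 0 < ∏ i ∈ s, (1 - t ^ (i + 1)) :=
    Finset.prod_pos fun i _ ↦ sub_pos.2 (pow_lt_one₀ h₀ h₁ i.succ_ne_zero)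
  simpa [Cconst] using inv_anti₀ (inv_pos.2 hpos) h

theorem prod_one_add_abs_pow_succ_le_Dconst (hq : |q| < 1) (s : Finset ℕ) :
    ∏ i ∈ s, (1 + |q| ^ (i + 1)) ≤ Dconst q :=
  Real.prod_le_tprod_of_one_le (fun i ↦ le_add_of_nonneg_right (by positivity))
    (Real.multipliable_one_add_of_summable (summable_pow_succ (abs_nonneg q) hq)) s

theorem one_sub_pow_succ_pos (hq : |q| < 1) (i : ℕ) : 0 < 1 - q ^ (i + 1) := by
  have h := pow_lt_one₀ (abs_nonneg q) hq i.succ_ne_zero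
  rw [← abs_pow] at h
  exact sub_pos.2 ((le_abs_self _).trans_lt h)

theorem prod_one_sub_pow_succ_mem_Icc (hq : |q| < 1) (s : Finset ℕ) :
    ∏ i ∈ s, (1 - q ^ (i + 1)) ∈ Set.Icc (Cconst |q|)⁻¹ (Dconst q) := by
  have hle (i : ℕ) : q ^ (i + 1) ≤ |q| ^ (i + 1) := abs_pow q (i + 1) ▸ le_abs_self _
  have hge (i : ℕ) : -|q| ^ (i + 1) ≤ q ^ (i + 1) := abs_pow q (i + 1) ▸ neg_abs_le _
  constructor
  · refine (inv_Cconst_le_prod_one_sub_pow_succ (abs_nonneg q) hq s).trans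
      (Finset.prod_le_prod (fun i _ ↦ sub_nonneg.2 (pow_le_one₀ (abs_nonneg q) hq.le))
        fun i _ ↦ sub_le_sub_left (hle i) 1)
  · refine le_trans (Finset.prod_le_prod (fun i _ ↦ (one_sub_pow_succ_pos hq i).le)
      fun i _ ↦ ?_) (prod_one_add_abs_pow_succ_le_Dconst hq s)
    linarith [hge i]

end Bounds

theorem qFact_eq_prod_div (q : ℝ) (n : ℕ) :
    qFact q n = (∏ i ∈ Finset.range n, (1 - q ^ (i + 1))) / (1 - q) ^ n := by
  induction n with
  | zero => simp [qFact]
  | succ k ih =>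
    rw [qFact, ih, qInt, div_mul_div_comm, ← Finset.prod_range_succ (fun i ↦ 1 - q ^ (i + 1)),
      ← pow_succ]

theorem qBinom_eq_prod_Ico_div_prod_range {q : ℝ} (hq : |q| < 1) {n m : ℕ} (h : m ≤ n) :
    qBinom q n m = (∏ i ∈ Finset.Ico m n, (1 - q ^ (i + 1))) /
      ∏ i ∈ Finset.range (n - m), (1 - q ^ (i + 1)) := by
  have hq1 : 1 - q ≠ 0 := (sub_pos.2 (abs_lt.1 hq).2).ne'
  have hm : ∏ i ∈ Finset.range m, (1 - q ^ (i + 1)) ≠ 0 :=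
    (Finset.prod_pos fun i _ ↦ one_sub_pow_succ_pos hq i).ne'
  have hpow : (1 - q) ^ m * (1 - q) ^ (n - m) = (1 - q) ^ n := by
    rw [← pow_add, Nat.add_sub_cancel' h]
  rw [qBinom, if_pos h, qFact_eq_prod_div, qFact_eq_prod_div, qFact_eq_prod_div,
    ← Finset.prod_range_mul_prod_Ico _ h, div_mul_div_comm, hpow,
    div_div_div_cancel_right₀ (pow_ne_zero n hq1), mul_div_mul_left _ _ hm]

/-- Uniform two-sided bound on q-binomial coefficients. -/
theorem qBinom_bounds (q : ℝ) (hq₁ : -1 < q) (hq₂ : q < 1) (n m : ℕ) (h : m ≤ n) :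
    (Dconst q * Cconst |q|)⁻¹ ≤ qBinom q n m ∧
    qBinom q n m ≤ Dconst q * Cconst |q| ∧
    0 < qBinom q n m := by
  have hq : |q| < 1 := abs_lt.2 ⟨hq₁, hq₂⟩
  have hC : 0 < Cconst |q| := one_pos.trans_le (one_le_Cconst (abs_nonneg q) hq)
  have hnum := prod_one_sub_pow_succ_mem_Icc hq (Finset.Ico m n)
  have hden := prod_one_sub_pow_succ_mem_Icc hq (Finset.range (n - m))
  obtain ⟨hlower, hupper⟩ := div_mem_Icc_of_mem_Icc_inv hC hnum hden
  rw [qBinom_eq_prod_Ico_div_prod_range hq h]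
  exact ⟨hlower, hupper,
    div_pos ((inv_pos.2 hC).trans_le hnum.1) ((inv_pos.2 hC).trans_le hden.1)⟩
end

section
/- (Span equality for the Rădulescu-type vectors) Under the q-commutation hypotheses below, write s = c + c* and s_r = c_r + c_r*. Then for all natural numbers n, m, the vector s^n·s_r^m·ξ lies in the ℂ-linear span of {ξ_{s,t} : s, t ∈ ℕ}; and conversely, for all natural numbers s, t, the vector ξ_{s,t} lies in the ℂ-linear span of {s^n·s_r^m·ξ : n, m ∈ ℕ}. -/
/-!
Let `F d` be the span of the vectors `ξ_{a,b}` with `a + b < d`. Pushing `c*`, `c_r*` and `W` past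
`c` and `c_r` with the commutation relations shows, by induction on the degree, that `c*` and
`c_r*` map `F (d + 1)` into `F d` (while `W` preserves `F (d + 1)`). Hence
`s^n s_r^m ξ ≡ ξ_{n,m}` modulo `F (n + m)`: the two families are related by a unitriangular
change of basis with respect to the degree, so each lies in the span of the other.
-/

open Submodule

namespace QFock

variable {R M : Type*} [CommRing R] [AddCommGroup M] [Module R M]

section Filtration

variable (x y : Module.End R M) (ξ : M)

/-- The index is strict, so that `degreeSpan x y ξ 0 = ⊥` and no truncated subtraction arises. -/
def degreeSpan (d : ℕ) : Submodule R M :=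
  span R {v | ∃ a b, a + b < d ∧ v = (x ^ a * y ^ b) ξ}

variable {x y ξ} {a b d : ℕ}

theorem degreeSpan_le_iff {N : Submodule R M} :
    degreeSpan x y ξ d ≤ N ↔ ∀ a b, a + b < d → (x ^ a * y ^ b) ξ ∈ N :=
  span_le.trans
    ⟨fun h a b hab => h ⟨a, b, hab, rfl⟩, by rintro h _ ⟨a, b, hab, rfl⟩; exact h a b hab⟩

theorem monomial_mem_degreeSpan (h : a + b < d) : (x ^ a * y ^ b) ξ ∈ degreeSpan x y ξ d :=
  subset_span ⟨a, b, h, rfl⟩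

theorem self_mem_degreeSpan_succ : ξ ∈ degreeSpan x y ξ (d + 1) := by
  simpa using monomial_mem_degreeSpan (x := x) (y := y) (ξ := ξ) (a := 0) (b := 0) (by omega)

theorem degreeSpan_mono : Monotone (degreeSpan x y ξ) := fun _ _ hde =>
  degreeSpan_le_iff.2 fun _ _ h => monomial_mem_degreeSpan (h.trans_le hde)

theorem degreeSpan_zero : degreeSpan x y ξ 0 = ⊥ := by
  simp [degreeSpan]

theorem apply_monomial_left : x ((x ^ a * y ^ b) ξ) = (x ^ (a + 1) * y ^ b) ξ := by
  rw [pow_succ', mul_assoc, Module.End.mul_apply _ (x ^ a * y ^ b)]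

theorem apply_monomial_right (hxy : Commute x y) :
    y ((x ^ a * y ^ b) ξ) = (x ^ a * y ^ (b + 1)) ξ := by
  rw [← Module.End.mul_apply, ← mul_assoc, ← (hxy.pow_left a).eq, mul_assoc, ← pow_succ']

theorem degreeSpan_le_comap_left : degreeSpan x y ξ d ≤ (degreeSpan x y ξ (d + 1)).comap x :=
  degreeSpan_le_iff.2 fun _ _ h => by
    rw [mem_comap, apply_monomial_left]
    exact monomial_mem_degreeSpan (by omega)

theorem degreeSpan_le_comap_right (hxy : Commute x y) :
    degreeSpan x y ξ d ≤ (degreeSpan x y ξ (d + 1)).comap y :=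
  degreeSpan_le_iff.2 fun _ _ h => by
    rw [mem_comap, apply_monomial_right hxy]
    exact monomial_mem_degreeSpan (by omega)

theorem degreeSpan_succ_le (hxy : Commute x y) (d : ℕ) :
    degreeSpan x y ξ (d + 1) ≤
      (R ∙ ξ) ⊔ (degreeSpan x y ξ d).map x ⊔ (degreeSpan x y ξ d).map y := by
  refine degreeSpan_le_iff.2 fun a b h => ?_
  rcases a with _ | a
  · rcases b with _ | b
    · simpa using mem_sup_left (mem_sup_left (mem_span_singleton_self ξ))
    · exact mem_sup_right ⟨_, monomial_mem_degreeSpan (by omega), apply_monomial_right hxy⟩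
  · exact mem_sup_left
      (mem_sup_right ⟨_, monomial_mem_degreeSpan (by omega), apply_monomial_left⟩)

end Filtration

def LowersDegree (x y : Module.End R M) (ξ : M) (x' : Module.End R M) : Prop :=
  ∀ d, degreeSpan x y ξ (d + 1) ≤ (degreeSpan x y ξ d).comap x'

section Triangular

variable {x y x' y' : Module.End R M} {ξ u : M} {n m : ℕ}

theorem mem_degreeSpan_succ_of_sub_monomial_mem
    (hu : u - (x ^ n * y ^ m) ξ ∈ degreeSpan x y ξ (n + m)) :
    u ∈ degreeSpan x y ξ (n + m + 1) := by
  simpa using add_mem (degreeSpan_mono (n + m).le_succ hu)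
    (monomial_mem_degreeSpan (x := x) (y := y) (ξ := ξ) (a := n) (b := m) (by omega))

theorem add_apply_sub_monomial_mem_left (hx' : LowersDegree x y ξ x')
    (hu : u - (x ^ n * y ^ m) ξ ∈ degreeSpan x y ξ (n + m)) :
    (x + x') u - (x ^ (n + 1) * y ^ m) ξ ∈ degreeSpan x y ξ (n + 1 + m) := by
  rw [LinearMap.add_apply, ← apply_monomial_left, add_sub_right_comm, ← map_sub,
    show n + 1 + m = n + m + 1 by omega]
  exact add_mem (degreeSpan_le_comap_left hu)
    (degreeSpan_mono (n + m).le_succ (hx' _ (mem_degreeSpan_succ_of_sub_monomial_mem hu)))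

theorem add_apply_sub_monomial_mem_right (hxy : Commute x y) (hy' : LowersDegree x y ξ y')
    (hu : u - (x ^ n * y ^ m) ξ ∈ degreeSpan x y ξ (n + m)) :
    (y + y') u - (x ^ n * y ^ (m + 1)) ξ ∈ degreeSpan x y ξ (n + (m + 1)) := by
  rw [LinearMap.add_apply, ← apply_monomial_right hxy, add_sub_right_comm, ← map_sub,
    ← add_assoc]
  exact add_mem (degreeSpan_le_comap_right hxy hu)
    (degreeSpan_mono (n + m).le_succ (hy' _ (mem_degreeSpan_succ_of_sub_monomial_mem hu)))

theorem pow_mul_pow_apply_sub_monomial_mem (hxy : Commute x y)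
    (hx' : LowersDegree x y ξ x') (hy' : LowersDegree x y ξ y') (n m : ℕ) :
    ((x + x') ^ n * (y + y') ^ m) ξ - (x ^ n * y ^ m) ξ ∈ degreeSpan x y ξ (n + m) := by
  induction n with
  | zero =>
    induction m with
    | zero => simp
    | succ m ih =>
      simpa [pow_succ'] using add_apply_sub_monomial_mem_right hxy hy' ih
  | succ n ih =>
    simpa [pow_succ', mul_assoc] using add_apply_sub_monomial_mem_left hx' ih

theorem pow_mul_pow_apply_mem_span_monomials (hxy : Commute x y)
    (hx' : LowersDegree x y ξ x') (hy' : LowersDegree x y ξ y') (n m : ℕ) :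
    ((x + x') ^ n * (y + y') ^ m) ξ ∈ span R {v | ∃ s t : ℕ, v = (x ^ s * y ^ t) ξ} := by
  have hF : degreeSpan x y ξ (n + m) ≤ span R {v | ∃ s t : ℕ, v = (x ^ s * y ^ t) ξ} :=
    degreeSpan_le_iff.2 fun a b _ => subset_span ⟨a, b, rfl⟩
  simpa using add_mem (hF (pow_mul_pow_apply_sub_monomial_mem hxy hx' hy' n m))
    (subset_span ⟨n, m, rfl⟩)

theorem monomial_mem_span_pow_mul_pow_apply (hxy : Commute x y)
    (hx' : LowersDegree x y ξ x') (hy' : LowersDegree x y ξ y') (s t : ℕ) :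
    (x ^ s * y ^ t) ξ ∈ span R {v | ∃ n m : ℕ, v = ((x + x') ^ n * (y + y') ^ m) ξ} := by
  set U := span R {v | ∃ n m : ℕ, v = ((x + x') ^ n * (y + y') ^ m) ξ}
  suffices ∀ d, degreeSpan x y ξ d ≤ U from
    this _ (monomial_mem_degreeSpan (Nat.lt_succ_self _))
  intro d
  induction d with
  | zero => simp [degreeSpan_zero]
  | succ d ih =>
    refine degreeSpan_le_iff.2 fun a b hab => ?_
    have hdiff := degreeSpan_mono (Nat.le_of_lt_succ hab)
      (pow_mul_pow_apply_sub_monomial_mem hxy hx' hy' a b)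
    rw [← sub_sub_cancel (((x + x') ^ a * (y + y') ^ b) ξ) ((x ^ a * y ^ b) ξ)]
    exact sub_mem (subset_span ⟨a, b, rfl⟩) (ih hdiff)

end Triangular

/-- `x`, `y`, `x'`, `y'`, `w` stand for `c`, `c_r`, `c*`, `c_r*`, `W`. -/
structure QCommRelations (q : R) (x y x' y' w : Module.End R M) : Prop where
  commute : Commute x y
  x'_mul_x : x' * x = q • (x * x') + 1
  y'_mul_y : y' * y = q • (y * y') + 1
  x'_mul_y : x' * y = y * x' + w
  y'_mul_x : y' * x = x * y' + w
  w_mul_x : w * x = q • (x * w)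
  w_mul_y : w * y = q • (y * w)

section Lowering

variable {q r : R} {x y x' y' w : Module.End R M} {ξ v : M} {d : ℕ}

variable (x y x' y' w ξ) in
/-- `w` is carried along in the induction because commuting `x'` past `y` (or `y'` past `x`)
produces it. -/
def lowerable (d : ℕ) : Submodule R M :=
  (degreeSpan x y ξ d).comap x' ⊓ (degreeSpan x y ξ d).comap y' ⊓
    (degreeSpan x y ξ (d + 1)).comap w

theorem mem_lowerable : v ∈ lowerable x y x' y' w ξ d ↔
    x' v ∈ degreeSpan x y ξ d ∧ y' v ∈ degreeSpan x y ξ d ∧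
      w v ∈ degreeSpan x y ξ (d + 1) := by
  simp [lowerable, and_assoc]

theorem apply_left_mem_lowerable (hrel : QCommRelations q x y x' y' w)
    (hv : v ∈ degreeSpan x y ξ (d + 1)) (hlow : v ∈ lowerable x y x' y' w ξ d) :
    x v ∈ lowerable x y x' y' w ξ (d + 1) := by
  obtain ⟨hx'v, hy'v, hwv⟩ := mem_lowerable.1 hlow
  refine mem_lowerable.2 ⟨?_, ?_, ?_⟩
  · rw [← Module.End.mul_apply, hrel.x'_mul_x]
    exact add_mem (smul_mem _ _ (degreeSpan_le_comap_left hx'v)) hv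
  · rw [← Module.End.mul_apply, hrel.y'_mul_x]
    exact add_mem (degreeSpan_le_comap_left hy'v) hwv
  · rw [← Module.End.mul_apply, hrel.w_mul_x]
    exact smul_mem _ _ (degreeSpan_le_comap_left hwv)

theorem apply_right_mem_lowerable (hrel : QCommRelations q x y x' y' w)
    (hv : v ∈ degreeSpan x y ξ (d + 1)) (hlow : v ∈ lowerable x y x' y' w ξ d) :
    y v ∈ lowerable x y x' y' w ξ (d + 1) := by
  obtain ⟨hx'v, hy'v, hwv⟩ := mem_lowerable.1 hlow
  refine mem_lowerable.2 ⟨?_, ?_, ?_⟩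
  · rw [← Module.End.mul_apply, hrel.x'_mul_y]
    exact add_mem (degreeSpan_le_comap_right hrel.commute hx'v) hwv
  · rw [← Module.End.mul_apply, hrel.y'_mul_y]
    exact add_mem (smul_mem _ _ (degreeSpan_le_comap_right hrel.commute hy'v)) hv
  · rw [← Module.End.mul_apply, hrel.w_mul_y]
    exact smul_mem _ _ (degreeSpan_le_comap_right hrel.commute hwv)

theorem degreeSpan_succ_le_lowerable (hrel : QCommRelations q x y x' y' w)
    (hx' : x' ξ = 0) (hy' : y' ξ = 0) (hw : w ξ = r • ξ) (d : ℕ) :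
    degreeSpan x y ξ (d + 1) ≤ lowerable x y x' y' w ξ d := by
  have hξ (d : ℕ) : ξ ∈ lowerable x y x' y' w ξ d :=
    mem_lowerable.2 ⟨by simp [hx'], by simp [hy'], hw ▸ smul_mem _ _ self_mem_degreeSpan_succ⟩
  induction d with
  | zero =>
    refine (degreeSpan_succ_le hrel.commute 0).trans ?_
    simpa [degreeSpan_zero, span_singleton_le_iff_mem] using hξ 0
  | succ d ih =>
    refine (degreeSpan_succ_le hrel.commute _).trans (sup_le (sup_le ?_ ?_) ?_)
    · exact (span_singleton_le_iff_mem _ _).2 (hξ _)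
    · exact map_le_iff_le_comap.2 fun v hv => apply_left_mem_lowerable hrel hv (ih hv)
    · exact map_le_iff_le_comap.2 fun v hv => apply_right_mem_lowerable hrel hv (ih hv)

theorem QCommRelations.lowersDegree_left (hrel : QCommRelations q x y x' y' w)
    (hx' : x' ξ = 0) (hy' : y' ξ = 0) (hw : w ξ = r • ξ) : LowersDegree x y ξ x' := fun d =>
  (degreeSpan_succ_le_lowerable hrel hx' hy' hw d).trans (inf_le_left.trans inf_le_left)

theorem QCommRelations.lowersDegree_right (hrel : QCommRelations q x y x' y' w)
    (hx' : x' ξ = 0) (hy' : y' ξ = 0) (hw : w ξ = r • ξ) : LowersDegree x y ξ y' := fun d =>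
  (degreeSpan_succ_le_lowerable hrel hx' hy' hw d).trans (inf_le_left.trans inf_le_right)

end Lowering

end QFock

open ContinuousLinearMap

theorem span_radulescu_vectors_general (q : ℝ)
    {H : Type*} [NormedAddCommGroup H] [InnerProductSpace ℂ H] [CompleteSpace H]
    (c cr W : H →L[ℂ] H)
    (h1 : adjoint c * c = (q : ℂ) • (c * adjoint c) + 1)
    (h2 : adjoint cr * cr = (q : ℂ) • (cr * adjoint cr) + 1)
    (h3 : c * cr = cr * c)
    (h4 : adjoint c * cr = cr * adjoint c + W)
    (h5 : adjoint cr * c = c * adjoint cr + W)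
    (h6 : W * c = (q : ℂ) • (c * W))
    (h7 : W * cr = (q : ℂ) • (cr * W))
    (k : ℕ) (ξ : H)
    (hc : adjoint c ξ = 0) (hcr : adjoint cr ξ = 0)
    (hW : W ξ = ((q : ℂ) ^ k) • ξ) :
    (∀ n m : ℕ, (((c + adjoint c) ^ n * (cr + adjoint cr) ^ m) ξ) ∈
        Submodule.span ℂ {v : H | ∃ s t : ℕ, v = (c ^ s * cr ^ t) ξ}) ∧
    (∀ s t : ℕ, ((c ^ s * cr ^ t) ξ) ∈
        Submodule.span ℂ
          {v : H | ∃ n m : ℕ, v = ((c + adjoint c) ^ n * (cr + adjoint cr) ^ m) ξ}) := by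
  have hrel : QFock.QCommRelations (q : ℂ) (c : H →ₗ[ℂ] H) cr (adjoint c) (adjoint cr) W :=
    ⟨congrArg toLinearMap h3, by simpa using congrArg toLinearMap h1,
      by simpa using congrArg toLinearMap h2, by simpa using congrArg toLinearMap h4,
      by simpa using congrArg toLinearMap h5, by simpa using congrArg toLinearMap h6,
      by simpa using congrArg toLinearMap h7⟩
  have hx' := hrel.lowersDegree_left hc hcr hW
  have hy' := hrel.lowersDegree_right hc hcr hW
  refine ⟨fun n m => ?_, fun s t => ?_⟩
  · exact_mod_cast QFock.pow_mul_pow_apply_mem_span_monomials hrel.commute hx' hy' n m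
  · exact_mod_cast QFock.monomial_mem_span_pow_mul_pow_apply hrel.commute hx' hy' s t

/-- Span equality for the Rădulescu-type vectors: with `s = c + c*` and `s_r = c_r + c_r*`,
the vectors `s^n s_r^m ξ` and the vectors `ξ_{s,t} = c^s c_r^t ξ` have the same linear span. -/
theorem span_radulescu_vectors (q : ℝ) (hq₁ : -1 < q) (hq₂ : q < 1)
    {H : Type*} [NormedAddCommGroup H] [InnerProductSpace ℂ H] [CompleteSpace H]
    (c cr W : H →L[ℂ] H)
    (h1 : adjoint c * c = (q : ℂ) • (c * adjoint c) + 1)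
    (h2 : adjoint cr * cr = (q : ℂ) • (cr * adjoint cr) + 1)
    (h3 : c * cr = cr * c)
    (h4 : adjoint c * cr = cr * adjoint c + W)
    (h5 : adjoint cr * c = c * adjoint cr + W)
    (h6 : W * c = (q : ℂ) • (c * W))
    (h7 : W * cr = (q : ℂ) • (cr * W))
    (h8 : adjoint c * W = (q : ℂ) • (W * adjoint c))
    (h9 : adjoint cr * W = (q : ℂ) • (W * adjoint cr))
    (k : ℕ) (ξ : H) (hξ : ‖ξ‖ = 1)
    (hc : adjoint c ξ = 0) (hcr : adjoint cr ξ = 0)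
    (hW : W ξ = ((q : ℂ) ^ k) • ξ) :
    (∀ n m : ℕ, (((c + adjoint c) ^ n * (cr + adjoint cr) ^ m) ξ) ∈
        Submodule.span ℂ {v : H | ∃ s t : ℕ, v = (c ^ s * cr ^ t) ξ}) ∧
    (∀ s t : ℕ, ((c ^ s * cr ^ t) ξ) ∈
        Submodule.span ℂ
          {v : H | ∃ n m : ℕ, v = ((c + adjoint c) ^ n * (cr + adjoint cr) ^ m) ξ}) :=
  span_radulescu_vectors_general q c cr W h1 h2 h3 h4 h5 h6 h7 k ξ hc hcr hW
end
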